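/- arXiv:2009.06409 — 2 statements merged into one kernel-verified Lean document; each statement's English description precedes it below -/
import Mathlib

section
/- Consider the SIR model with R₀ ≥ N/S(0) and a threshold M with I(0) < M < S(0) + I(0). If r* ≥ N/S(0) satisfies (N/r*)·(ln(N/(r*·S(0))) − 1) − R(0) + N = M, then I(t) ≤ M for all t ≥ 0 if and only if R₀ ≤ r*. -/
/-!
Put `c = γ / β` with `β = γ R₀ / N`, i.e. `c = N / R₀`. Along a solution `I + S - c log S`
is conserved, and `S ↦ S - c log S` is minimal at `S = c`, so `I` never exceeds
`I₀ + S₀ + c (log (c / S₀) - 1)`. Since `S₀ ≥ c` and `S` eventually drops below `c`, this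
value is attained. It is strictly decreasing in `c ∈ (0, S₀]`, i.e. strictly increasing in
`R₀`, which turns the bound `I ≤ M` into `R₀ ≤ r*`.
-/

open Set Real

lemma monotoneOn_Ici_of_hasDerivAt_nonneg {f f' : ℝ → ℝ} {a : ℝ}
    (hf : ∀ t ≥ a, HasDerivAt f (f' t) t) (hf' : ∀ t ≥ a, 0 ≤ f' t) :
    MonotoneOn f (Ici a) := by
  refine monotoneOn_of_hasDerivWithinAt_nonneg (f' := f') (convex_Ici a)
    (fun t ht => (hf t ht).continuousAt.continuousWithinAt) (fun t ht => ?_) (fun t ht => ?_)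
  · rw [interior_Ici] at ht ⊢
    exact (hf t (le_of_lt ht)).hasDerivWithinAt
  · rw [interior_Ici] at ht
    exact hf' t (le_of_lt ht)

lemma eq_of_hasDerivAt_zero_Ici {f : ℝ → ℝ} {a : ℝ} (hf : ∀ t ≥ a, HasDerivAt f 0 t) :
    ∀ t ≥ a, f t = f a := fun t ht =>
  constant_of_has_deriv_right_zero (fun s hs => (hf s hs.1).continuousAt.continuousWithinAt)
    (fun s hs => (hf s hs.1).hasDerivWithinAt) t ⟨ht, le_rfl⟩

lemma le_mul_exp_of_neg_mul_le_deriv {f f' : ℝ → ℝ} {K : ℝ}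
    (hf : ∀ t ≥ 0, HasDerivAt f (f' t) t) (hf' : ∀ t ≥ 0, -K * f t ≤ f' t) :
    ∀ t ≥ 0, f 0 ≤ f t * exp (K * t) := by
  have hderiv : ∀ t ≥ 0, HasDerivAt (fun s => f s * exp (K * s))
      ((f' t + K * f t) * exp (K * t)) t := fun t ht =>
    ((hf t ht).mul ((hasDerivAt_id' t).const_mul K).exp).congr_deriv (by ring)
  have hmono := monotoneOn_Ici_of_hasDerivAt_nonneg hderiv fun t ht =>
    mul_nonneg (by linarith [hf' t ht]) (exp_pos _).le
  intro t ht
  simpa using hmono self_mem_Ici (mem_Ici.2 ht) ht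

lemma le_sub_mul_of_deriv_le_neg {f f' : ℝ → ℝ} {a : ℝ}
    (hf : ∀ t ≥ 0, HasDerivAt f (f' t) t) (hf' : ∀ t ≥ 0, f' t ≤ -a) :
    ∀ t ≥ 0, f t ≤ f 0 - a * t := by
  have hderiv : ∀ t ≥ 0, HasDerivAt (fun s => f 0 - a * s - f s) (-a - f' t) t := fun t ht =>
    ((((hasDerivAt_id' t).const_mul a).const_sub (f 0)).sub (hf t ht)).congr_deriv (by ring)
  have hmono := monotoneOn_Ici_of_hasDerivAt_nonneg hderiv fun t ht => by linarith [hf' t ht]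
  intro t ht
  have := hmono self_mem_Ici (mem_Ici.2 ht) ht
  simp only [mul_zero, sub_zero, sub_self] at this
  linarith

lemma sub_mul_log_self_le_sub_mul_log {c x : ℝ} (hc : 0 < c) (hx : 0 < x) :
    c - c * log c ≤ x - c * log x := by
  have h := mul_le_mul_of_nonneg_left (log_le_sub_one_of_pos (div_pos hx hc)) hc.le
  rw [log_div hx.ne' hc.ne', mul_sub_one, mul_div_cancel₀ x hc.ne'] at h
  linarith

noncomputable def sirPeak (c S₀ I₀ : ℝ) : ℝ := I₀ + S₀ + c * (log (c / S₀) - 1)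

lemma sirPeak_strictAntiOn (S₀ I₀ : ℝ) :
    StrictAntiOn (fun c => sirPeak c S₀ I₀) (Ioc 0 S₀) := by
  intro a ha b hb hab
  have hb_pos : 0 < b := ha.1.trans hab
  have hS₀ : 0 < S₀ := hb_pos.trans_le hb.2
  have hlog_b : log (b / S₀) ≤ 0 :=
    log_nonpos (div_pos hb_pos hS₀).le ((div_le_one hS₀).2 hb.2)
  have hlog_ab : log (b / a) < b / a - 1 := log_lt_sub_one_of_pos (div_pos hb_pos ha.1)
    (by rw [ne_eq, div_eq_one_iff_eq ha.1.ne']; exact hab.ne')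
  have hsplit : log (a / S₀) = log (b / S₀) - log (b / a) := by
    rw [← log_div (div_pos hb_pos hS₀).ne' (div_pos hb_pos ha.1).ne']
    congr 1
    field_simp
  have hmul : a * (b / a - 1) = b - a := by field_simp [ha.1.ne']
  have hprod : 0 ≤ (b - a) * -log (b / S₀) :=
    mul_nonneg (sub_nonneg.2 hab.le) (neg_nonneg.2 hlog_b)
  simp only [sirPeak, hsplit]
  linarith [mul_lt_mul_of_pos_left hlog_ab ha.1]

/-- The `S, I` equations of the SIR model on `[0, ∞)`; `R = N - S - I` decouples. -/
structure IsSIRSolution (β γ : ℝ) (S I : ℝ → ℝ) : Prop where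
  hasDerivAt_S : ∀ t ≥ (0:ℝ), HasDerivAt S (-β * S t * I t) t
  hasDerivAt_I : ∀ t ≥ (0:ℝ), HasDerivAt I (β * S t * I t - γ * I t) t
  S_nonneg : ∀ t ≥ (0:ℝ), 0 ≤ S t
  I_nonneg : ∀ t ≥ (0:ℝ), 0 ≤ I t

namespace IsSIRSolution

variable {β γ : ℝ} {S I : ℝ → ℝ}

lemma S_pos (h : IsSIRSolution β γ S I) (hβ : 0 ≤ β) {K : ℝ} (hI : ∀ t ≥ 0, I t ≤ K)
    (hS₀ : 0 < S 0) : ∀ t ≥ 0, 0 < S t := by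
  have hbound := le_mul_exp_of_neg_mul_le_deriv (K := β * K) h.hasDerivAt_S fun t ht => by
    have := mul_le_mul_of_nonneg_left (hI t ht) (mul_nonneg hβ (h.S_nonneg t ht))
    linarith
  intro t ht
  exact pos_of_mul_pos_left (hS₀.trans_le (hbound t ht)) (exp_pos _).le

lemma add_sub_mul_log_eq (h : IsSIRSolution β γ S I) (hβ : β ≠ 0)
    (hS : ∀ t ≥ 0, 0 < S t) :
    ∀ t ≥ 0, I t + S t - γ / β * log (S t) = I 0 + S 0 - γ / β * log (S 0) := by
  refine eq_of_hasDerivAt_zero_Ici fun t ht => ?_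
  refine (((h.hasDerivAt_I t ht).add (h.hasDerivAt_S t ht)).sub
    (((h.hasDerivAt_S t ht).log (hS t ht).ne').const_mul (γ / β))).congr_deriv ?_
  field_simp [(hS t ht).ne']
  ring

lemma I_le_sirPeak (h : IsSIRSolution β γ S I) (hβ : 0 < β) (hγ : 0 < γ)
    (hS : ∀ t ≥ 0, 0 < S t) : ∀ t ≥ 0, I t ≤ sirPeak (γ / β) (S 0) (I 0) := by
  intro t ht
  have hmin := sub_mul_log_self_le_sub_mul_log (div_pos hγ hβ) (hS t ht)
  rw [sirPeak, log_div (div_pos hγ hβ).ne' (hS 0 le_rfl).ne']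
  linarith [h.add_sub_mul_log_eq hβ.ne' hS t ht]

lemma exists_S_le (h : IsSIRSolution β γ S I) (hβ : 0 < β) (hγ : 0 < γ) (hI₀ : 0 < I 0) :
    ∃ t ≥ 0, S t ≤ γ / β := by
  by_contra! hS
  have hI_mono := monotoneOn_Ici_of_hasDerivAt_nonneg h.hasDerivAt_I fun t ht => by
    have : γ ≤ β * S t := (div_lt_iff₀' hβ).1 (hS t ht) |>.le
    nlinarith [h.I_nonneg t ht]
  have hI : ∀ t ≥ 0, I 0 ≤ I t := fun t ht => hI_mono self_mem_Ici (mem_Ici.2 ht) ht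
  -- While `S > γ / β`, `S' = -β S I ≤ -γ I₀`, so `S` would become negative.
  have hdecay := le_sub_mul_of_deriv_le_neg h.hasDerivAt_S (a := γ * I 0) fun t ht => by
    have hβS : γ < β * S t := (div_lt_iff₀' hβ).1 (hS t ht)
    nlinarith [hI t ht]
  have hT : 0 ≤ S 0 / (γ * I 0) :=
    (div_pos ((div_pos hγ hβ).trans (hS 0 le_rfl)) (by positivity)).le
  have := hdecay _ hT
  rw [mul_div_cancel₀ _ (by positivity), sub_self] at this
  linarith [hS _ hT, div_pos hγ hβ]

lemma exists_I_eq_sirPeak (h : IsSIRSolution β γ S I) (hβ : 0 < β) (hγ : 0 < γ)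
    (hS : ∀ t ≥ 0, 0 < S t) (hI₀ : 0 < I 0) (hS₀ : γ / β ≤ S 0) :
    ∃ t ≥ 0, I t = sirPeak (γ / β) (S 0) (I 0) := by
  obtain ⟨T, hT, hST⟩ := h.exists_S_le hβ hγ hI₀
  obtain ⟨t, ht, hSt⟩ := intermediate_value_Icc' hT
    (fun s hs => (h.hasDerivAt_S s hs.1).continuousAt.continuousWithinAt) ⟨hST, hS₀⟩
  refine ⟨t, ht.1, ?_⟩
  have hW := h.add_sub_mul_log_eq hβ.ne' hS t ht.1
  rw [hSt] at hW
  rw [sirPeak, log_div (div_pos hγ hβ).ne' (hS 0 le_rfl).ne']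
  linarith

end IsSIRSolution

theorem sir_threshold_iff_R0_le_critical_general
    (N γ R₀ M rstar : ℝ) (S I R : ℝ → ℝ)
    (hN : 0 < N) (hγ : 0 < γ) (hR₀ : 0 < R₀)
    (hS' : ∀ t ≥ (0:ℝ), HasDerivAt S (-(γ * R₀ / N) * S t * I t) t)
    (hI' : ∀ t ≥ (0:ℝ), HasDerivAt I ((γ * R₀ / N) * S t * I t - γ * I t) t)
    (hSnn : ∀ t ≥ (0:ℝ), 0 ≤ S t) (hInn : ∀ t ≥ (0:ℝ), 0 ≤ I t)
    (hRnn : ∀ t ≥ (0:ℝ), 0 ≤ R t)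
    (hsum : ∀ t ≥ (0:ℝ), S t + I t + R t = N)
    (hS0 : 0 < S 0) (hI0 : 0 < I 0)
    (hR₀ge : R₀ ≥ N / S 0)
    (hrstar : rstar ≥ N / S 0)
    (hrstarEq : (N / rstar) * (Real.log (N / (rstar * S 0)) - 1) - R 0 + N = M) :
    (∀ t ≥ (0:ℝ), I t ≤ M) ↔ R₀ ≤ rstar := by
  have hβ : 0 < γ * R₀ / N := by positivity
  have hsol : IsSIRSolution (γ * R₀ / N) γ S I := ⟨hS', hI', hSnn, hInn⟩
  have hc : γ / (γ * R₀ / N) = N / R₀ := by field_simp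
  have hS := hsol.S_pos hβ.le (K := N)
    (fun t ht => by linarith [hsum t ht, hSnn t ht, hRnn t ht]) hS0
  have hrstar_pos : 0 < rstar := (div_pos hN hS0).trans_le hrstar
  have hmem : N / R₀ ∈ Ioc 0 (S 0) :=
    ⟨div_pos hN hR₀, (div_le_comm₀ hR₀ hS0).2 hR₀ge⟩
  have hmem_star : N / rstar ∈ Ioc 0 (S 0) :=
    ⟨div_pos hN hrstar_pos, (div_le_comm₀ hrstar_pos hS0).2 hrstar⟩
  have hbound := hsol.I_le_sirPeak hβ hγ hS
  obtain ⟨ts, hts, hIts⟩ := hsol.exists_I_eq_sirPeak hβ hγ hS hI0 (hc ▸ hmem.2)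
  rw [hc] at hbound hIts
  have hM : M = sirPeak (N / rstar) (S 0) (I 0) := by
    rw [← hrstarEq, sirPeak, div_div]
    linarith [hsum 0 le_rfl]
  calc (∀ t ≥ (0:ℝ), I t ≤ M) ↔ sirPeak (N / R₀) (S 0) (I 0) ≤ M :=
        ⟨fun hle => hIts ▸ hle ts hts, fun hle t ht => (hbound t ht).trans hle⟩
    _ ↔ N / rstar ≤ N / R₀ :=
        hM ▸ (sirPeak_strictAntiOn (S 0) (I 0)).le_iff_ge hmem hmem_star
    _ ↔ R₀ ≤ rstar := div_le_div_iff_of_pos_left hN hrstar_pos hR₀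

/-- In the SIR model with R₀ ≥ N/S(0) and I(0) < M < S(0) + I(0), if
r* ≥ N/S(0) satisfies (N/r*)·(ln(N/(r*·S(0))) − 1) − R(0) + N = M, then
I(t) ≤ M for all t ≥ 0 if and only if R₀ ≤ r*. -/
theorem sir_threshold_iff_R0_le_critical
    (N γ R₀ M rstar : ℝ) (S I R : ℝ → ℝ)
    (hN : 0 < N) (hγ : 0 < γ) (hR₀ : 0 < R₀)
    (hS' : ∀ t ≥ (0:ℝ), HasDerivAt S (-(γ * R₀ / N) * S t * I t) t)
    (hI' : ∀ t ≥ (0:ℝ), HasDerivAt I ((γ * R₀ / N) * S t * I t - γ * I t) t)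
    (hR' : ∀ t ≥ (0:ℝ), HasDerivAt R (γ * I t) t)
    (hSnn : ∀ t ≥ (0:ℝ), 0 ≤ S t) (hInn : ∀ t ≥ (0:ℝ), 0 ≤ I t)
    (hRnn : ∀ t ≥ (0:ℝ), 0 ≤ R t)
    (hsum : ∀ t ≥ (0:ℝ), S t + I t + R t = N)
    (hS0 : 0 < S 0) (hI0 : 0 < I 0)
    (hR₀ge : R₀ ≥ N / S 0)
    (hM₁ : I 0 < M) (hM₂ : M < S 0 + I 0)
    (hrstar : rstar ≥ N / S 0)
    (hrstarEq : (N / rstar) * (Real.log (N / (rstar * S 0)) - 1) - R 0 + N = M) :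
    (∀ t ≥ (0:ℝ), I t ≤ M) ↔ R₀ ≤ rstar :=
  sir_threshold_iff_R0_le_critical_general N γ R₀ M rstar S I R hN hγ hR₀ hS' hI' hSnn hInn hRnn
    hsum hS0 hI0 hR₀ge hrstar hrstarEq
end

section
/- Let b be a real number with −1 < b < 0. Then the equation v·ln(v) = v + b has exactly two solutions v > 0; exactly one of them lies in the interval (0,1) and exactly one lies in the interval (1,e). -/
/-! The solutions are the points where `g v = v log v - v` takes the value `b`. Since `g' = log`,
`g` decreases strictly on `[0, 1]` from `g 0 = 0` to `g 1 = -1` and increases strictly on `[1, ∞)`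
from `-1` back to `g e = 0`. So each `b ∈ (-1, 0)` is attained exactly once on each branch, by the
intermediate value theorem, once in `(0, 1)` and once in `(1, e)`. -/

open Real Set

lemma continuous_mul_log_sub_self : Continuous fun v : ℝ ↦ v * log v - v :=
  continuous_mul_log.sub continuous_id

lemma hasDerivAt_mul_log_sub_self {x : ℝ} (hx : x ≠ 0) :
    HasDerivAt (fun v ↦ v * log v - v) (log x) x := by
  simpa using (hasDerivAt_mul_log hx).fun_sub (hasDerivAt_id' x)

lemma strictAntiOn_mul_log_sub_self : StrictAntiOn (fun v : ℝ ↦ v * log v - v) (Icc 0 1) := by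
  refine strictAntiOn_of_deriv_neg (convex_Icc 0 1) continuous_mul_log_sub_self.continuousOn
    fun x hx ↦ ?_
  rw [interior_Icc] at hx
  rw [(hasDerivAt_mul_log_sub_self hx.1.ne').deriv]
  exact log_neg hx.1 hx.2

lemma strictMonoOn_mul_log_sub_self : StrictMonoOn (fun v : ℝ ↦ v * log v - v) (Ici 1) := by
  refine strictMonoOn_of_deriv_pos (convex_Ici 1) continuous_mul_log_sub_self.continuousOn
    fun x hx ↦ ?_
  rw [interior_Ici] at hx
  rw [(hasDerivAt_mul_log_sub_self (zero_lt_one.trans hx).ne').deriv]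
  exact log_pos hx

/-- For −1 < b < 0, the equation v·ln(v) = v + b has exactly two
solutions v > 0; exactly one lies in (0,1) and exactly one lies in (1,e). -/
theorem vlogv_two_solutions_located (b : ℝ) (hb₁ : -1 < b) (hb₂ : b < 0) :
    ∃ v₁ v₂ : ℝ,
      v₁ ∈ Set.Ioo (0:ℝ) 1 ∧ v₂ ∈ Set.Ioo (1:ℝ) (Real.exp 1) ∧
      v₁ * Real.log v₁ = v₁ + b ∧ v₂ * Real.log v₂ = v₂ + b ∧
      ∀ v : ℝ, 0 < v → v * Real.log v = v + b → v = v₁ ∨ v = v₂ := by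
  set g : ℝ → ℝ := fun v ↦ v * log v - v
  have hg_eq {v : ℝ} : v * log v = v + b ↔ g v = b := by
    simp only [g]
    constructor <;> intro h <;> linarith
  have hg1 : g 1 = -1 := by simp [g]
  have hb : b ∈ Ioo (g 1) (g 0) ∧ b ∈ Ioo (g 1) (g (exp 1)) := by
    simp [g, hb₁, hb₂]
  obtain ⟨v₁, hv₁, hgv₁⟩ := intermediate_value_Ioo' zero_le_one
    continuous_mul_log_sub_self.continuousOn hb.1
  obtain ⟨v₂, hv₂, hgv₂⟩ := intermediate_value_Ioo (one_le_exp zero_le_one)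
    continuous_mul_log_sub_self.continuousOn hb.2
  refine ⟨v₁, v₂, hv₁, hv₂, hg_eq.2 hgv₁, hg_eq.2 hgv₂, fun v hv hvb ↦ ?_⟩
  replace hvb := hg_eq.1 hvb
  rcases lt_trichotomy v 1 with hlt | rfl | hgt
  · exact .inl (strictAntiOn_mul_log_sub_self.injOn ⟨hv.le, hlt.le⟩ ⟨hv₁.1.le, hv₁.2.le⟩
      (hvb.trans hgv₁.symm))
  · linarith
  · exact .inr (strictMonoOn_mul_log_sub_self.injOn hgt.le hv₂.1.le (hvb.trans hgv₂.symm))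
end
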